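/- arXiv:2303.13208 — 6 statements merged into one kernel-verified Lean document; each statement's English description precedes it below -/
import Mathlib

section
/- Let Φ be a commutative ring in which 2 is invertible, A, B Φ-modules and ψ : A × A → B bilinear. Let G be A × B with the operation (a,b)·(c,d) = (a+c, b+d+ψ(a,c)), and let L be A × B with the operation (a,b)∗(c,d) = (a+c, b+d+(ψ(a,c)−ψ(c,a))/2). Then the map (a,b) ↦ (a, b − ψ(a,a)/2) is a group isomorphism from G to L. -/
/-! Expanding `ψ (a + c) (a + c)` by bilinearity, the correction `- ψ(a,a)/2` turns the
cocycle `ψ(a,c)` of `G` into the alternating cocycle `(ψ(a,c) - ψ(c,a))/2` of `L`.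
The map itself is a shear of `A × B`, hence a bijection. -/

theorem LinearMap.invOf_two_smul_apply_add_self {R M N : Type*} [CommRing R] [Invertible (2 : R)]
    [AddCommGroup M] [Module R M] [AddCommGroup N] [Module R N]
    (ψ : M →ₗ[R] M →ₗ[R] N) (a c : M) :
    ⅟(2 : R) • ψ (a + c) (a + c) =
      ⅟(2 : R) • ψ a a + ⅟(2 : R) • ψ c c + (ψ a c - ⅟(2 : R) • (ψ a c - ψ c a)) := by
  simp only [map_add, LinearMap.add_apply]
  linear_combination (norm := module) invOf_two_smul_add_invOf_two_smul R (ψ a c)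

/-- If 2 is invertible in Φ, the map (a,b) ↦ (a, b − ψ(a,a)/2) is a group
isomorphism from G = (A × B, (a,b)·(c,d) = (a+c, b+d+ψ(a,c))) to
L = (A × B, (a,b)∗(c,d) = (a+c, b+d+(ψ(a,c)−ψ(c,a))/2)). -/
theorem reparametrization_iso (Φ : Type*) [CommRing Φ] [Invertible (2 : Φ)]
    (A B : Type*) [AddCommGroup A] [Module Φ A] [AddCommGroup B] [Module Φ B]
    (ψ : A →ₗ[Φ] A →ₗ[Φ] B) :
    let mulG : A × B → A × B → A × B := fun p q => (p.1 + q.1, p.2 + q.2 + ψ p.1 q.1)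
    let mulL : A × B → A × B → A × B := fun p q =>
      (p.1 + q.1, p.2 + q.2 + (⅟(2 : Φ)) • (ψ p.1 q.1 - ψ q.1 p.1))
    let f : A × B → A × B := fun p => (p.1, p.2 - (⅟(2 : Φ)) • ψ p.1 p.1)
    Function.Bijective f ∧ ∀ p q : A × B, f (mulG p q) = mulL (f p) (f q) := by
  intro mulG mulL f
  refine ⟨?_, fun p q => Prod.ext rfl ?_⟩
  · exact (Equiv.prodShear (Equiv.refl A) fun a => Equiv.subRight (⅟(2 : Φ) • ψ a a)).bijective
  · simp only [f, mulG, mulL, ψ.invOf_two_smul_apply_add_self]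
    abel
end

section
/- Let H be a bialgebra over a commutative ring Φ. Define Z_m = ker((Id − ηε)^{⊗(m+1)} ∘ Δ^m), where Δ^1 = Δ and Δ^{m+1} = (Δ^m ⊗ Id) ∘ Δ. Then Z_m ⊆ Z_{m+1} for all m ≥ 1. -/
open TensorProduct

noncomputable section

variable (Φ : Type) [CommRing Φ] (H : Type) [Ring H] [Bialgebra Φ H]

/-- Iterated tensor powers: `Tpow Φ H m` is `H^{⊗(m+1)}` (nested to the left). -/
def Tpow : ℕ → ModuleCat Φ := fun n =>
  Nat.rec (ModuleCat.of Φ H) (fun _ T => ModuleCat.of Φ (T ⊗[Φ] H)) n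

/-- Iterated comultiplication Δ^m : H → H^{⊗(m+1)}, with Δ^0 = Id and
Δ^{m+1} = (Δ^m ⊗ Id) ∘ Δ. -/
def Dpow : (m : ℕ) → H →ₗ[Φ] (Tpow Φ H m)
  | 0 => LinearMap.id
  | m + 1 =>
      (TensorProduct.map (Dpow m) (LinearMap.id : H →ₗ[Φ] H)) ∘ₗ
        (Coalgebra.comul (R := Φ) (A := H))

/-- The operator Id − ηε on H. -/
def Emap : H →ₗ[Φ] H :=
  LinearMap.id - (Algebra.linearMap Φ H) ∘ₗ (Coalgebra.counit (R := Φ) (A := H))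

/-- (Id − ηε)^{⊗(m+1)} on H^{⊗(m+1)}. -/
def Epow : (m : ℕ) → (Tpow Φ H m) →ₗ[Φ] (Tpow Φ H m)
  | 0 => Emap Φ H
  | m + 1 => TensorProduct.map (Epow m) (Emap Φ H)

/-! With `Δ̄ x = Δ x − x ⊗ 1 − 1 ⊗ x`, one has `(E ⊗ E) ∘ Δ = Δ̄ ∘ E` for `E = Id − ηε`. Peeling off the
last tensor factor, induction on `m` turns this into
`E^{⊗(m+2)} ∘ Δ^{m+1} = (Δ̄ ⊗ Id^{⊗m}) ∘ E^{⊗(m+1)} ∘ Δ^m`,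
so the kernel of `E^{⊗(m+1)} ∘ Δ^m` lies in that of `E^{⊗(m+2)} ∘ Δ^{m+1}`. -/

def tmulOne : H →ₗ[Φ] H ⊗[Φ] H := (TensorProduct.mk Φ H H).flip 1

def oneTmul : H →ₗ[Φ] H ⊗[Φ] H := TensorProduct.mk Φ H H 1

def reducedComul : H →ₗ[Φ] H ⊗[Φ] H := Coalgebra.comul - tmulOne Φ H - oneTmul Φ H

/-- `Δ̄ ⊗ Id^{⊗m}` -/
def reducedComulLeft : (m : ℕ) → Tpow Φ H m →ₗ[Φ] Tpow Φ H (m + 1)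
  | 0 => reducedComul Φ H
  | m + 1 => TensorProduct.map (reducedComulLeft m) LinearMap.id

local notation "U" => Algebra.linearMap Φ H ∘ₗ Coalgebra.counit (R := Φ) (A := H)

lemma lTensor_unit_counit_comp_comul : (U).lTensor H ∘ₗ Coalgebra.comul = tmulOne Φ H := by
  rw [LinearMap.lTensor_comp, LinearMap.comp_assoc, Coalgebra.lTensor_counit_comp_comul]
  ext x
  simp [tmulOne]

lemma rTensor_unit_counit_comp_comul : (U).rTensor H ∘ₗ Coalgebra.comul = oneTmul Φ H := by
  rw [LinearMap.rTensor_comp, LinearMap.comp_assoc, Coalgebra.rTensor_counit_comp_comul]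
  ext x
  simp [oneTmul]

lemma rTensor_comp_tmulOne (f : H →ₗ[Φ] H) : f.rTensor H ∘ₗ tmulOne Φ H = tmulOne Φ H ∘ₗ f := by
  ext x
  simp [tmulOne]

lemma comul_comp_unit_counit : Coalgebra.comul ∘ₗ U = oneTmul Φ H ∘ₗ U := by
  ext x
  simp [oneTmul, Algebra.algebraMap_eq_smul_one, Algebra.TensorProduct.one_def]

lemma map_Emap_comp_comul :
    TensorProduct.map (Emap Φ H) (Emap Φ H) ∘ₗ Coalgebra.comul =
      reducedComul Φ H ∘ₗ Emap Φ H := by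
  have hl : (Emap Φ H).lTensor H = LinearMap.id - (U).lTensor H := by
    rw [Emap, LinearMap.lTensor_sub, LinearMap.lTensor_id]
  have hr : (Emap Φ H).rTensor H = LinearMap.id - (U).rTensor H := by
    rw [Emap, LinearMap.rTensor_sub, LinearMap.rTensor_id]
  rw [← LinearMap.rTensor_comp_lTensor, LinearMap.comp_assoc, hl, LinearMap.sub_comp,
    LinearMap.id_comp, lTensor_unit_counit_comp_comul, LinearMap.comp_sub, rTensor_comp_tmulOne,
    hr, LinearMap.sub_comp, LinearMap.id_comp, rTensor_unit_counit_comp_comul, reducedComul, Emap]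
  simp only [LinearMap.sub_comp, LinearMap.comp_sub, LinearMap.comp_id, comul_comp_unit_counit]
  abel

lemma Epow_comp_Dpow_succ (m : ℕ) :
    Epow Φ H (m + 1) ∘ₗ Dpow Φ H (m + 1) =
      TensorProduct.map (Epow Φ H m ∘ₗ Dpow Φ H m) (Emap Φ H) ∘ₗ Coalgebra.comul := by
  show TensorProduct.map (Epow Φ H m) (Emap Φ H) ∘ₗ
      (TensorProduct.map (Dpow Φ H m) LinearMap.id ∘ₗ Coalgebra.comul) = _
  rw [← LinearMap.comp_assoc, ← TensorProduct.map_comp, LinearMap.comp_id]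

lemma Epow_comp_Dpow_succ_eq_reducedComulLeft_comp (m : ℕ) :
    Epow Φ H (m + 1) ∘ₗ Dpow Φ H (m + 1) =
      reducedComulLeft Φ H m ∘ₗ Epow Φ H m ∘ₗ Dpow Φ H m := by
  induction m with
  | zero =>
    rw [Epow_comp_Dpow_succ]
    exact map_Emap_comp_comul Φ H
  | succ m ih =>
    rw [Epow_comp_Dpow_succ, ih, ← LinearMap.id_comp (Emap Φ H), TensorProduct.map_comp,
      LinearMap.comp_assoc, ← Epow_comp_Dpow_succ, ← ih]
    rfl

theorem Z_mono (m : ℕ) :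
    LinearMap.ker ((Epow Φ H m) ∘ₗ (Dpow Φ H m)) ≤
      LinearMap.ker ((Epow Φ H (m + 1)) ∘ₗ (Dpow Φ H (m + 1))) := by
  rw [Epow_comp_Dpow_succ_eq_reducedComulLeft_comp]
  exact LinearMap.ker_le_ker_comp _ _

end
end

section
/- For an integer n ≥ 2, let d = gcd{ C(n,i) : 0 < i < n } be the greatest common divisor of the interior binomial coefficients. Then d ≠ 1 if and only if n is a prime power p^e, in which case d = p. -/
/-!
If `q` is a prime dividing every interior `C(n, i)`, then by Lucas's theorem
`C(n, q ^ v) ≡ n / q ^ v (mod q)` with `v = v_q(n)`, so `q ^ v` cannot be interior and `n = q ^ v`.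
Conversely, for `n = p ^ e` every interior coefficient is divisible by `p`, while
`C(p ^ e, p ^ (e - 1))` is divisible by `p` exactly once (Kummer) and hence the gcd is `p`.
-/

theorem Nat.Ioo_zero_eq_Icc_one_sub_one (n : ℕ) : Finset.Ioo 0 n = Finset.Icc 1 (n - 1) := by
  ext i
  simp only [Finset.mem_Ioo, Finset.mem_Icc]
  omega

theorem Nat.isPrimePow_iff_exists_prime_pow {n : ℕ} (hn : 1 < n) :
    IsPrimePow n ↔ ∃ p e : ℕ, p.Prime ∧ n = p ^ e := by
  rw [isPrimePow_nat_iff]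
  constructor
  · rintro ⟨p, e, hp, -, rfl⟩
    exact ⟨p, e, hp, rfl⟩
  · rintro ⟨p, e, hp, rfl⟩
    refine ⟨p, e, hp, Nat.pos_of_ne_zero ?_, rfl⟩
    rintro rfl
    exact hn.ne rfl

/-- For n ≥ 2, the gcd d of the interior binomial coefficients
C(n,i), 0 < i < n, satisfies: d ≠ 1 iff n is a prime power p^e, in which case d = p. -/
theorem gcd_interior_binomials (n : ℕ) (hn : 2 ≤ n) :
    (((Finset.Ioo 0 n).gcd fun i => n.choose i) ≠ 1 ↔
        ∃ p e : ℕ, p.Prime ∧ n = p ^ e) ∧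
      ∀ p e : ℕ, p.Prime → n = p ^ e →
        ((Finset.Ioo 0 n).gcd fun i => n.choose i) = p := by
  rw [Nat.Ioo_zero_eq_Icc_one_sub_one, ← Nat.isPrimePow_iff_exists_prime_pow hn]
  refine ⟨⟨fun hgcd => ?_, fun hpow => ?_⟩, ?_⟩
  · by_contra hpow
    exact hgcd (Choose.gcd_choose_eq_one_of_not_isPrimePow hn hpow)
  · rw [Choose.gcd_choose_eq_minFac_of_isPrimePow hpow]
    exact (Nat.minFac_prime hpow.ne_one).ne_one
  · rintro p e hp rfl
    have he : e ≠ 0 := by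
      rintro rfl
      simp at hn
    rw [Choose.gcd_choose_eq_minFac_of_isPrimePow (hp.isPrimePow.pow he), hp.pow_minFac he]
end

section
/- Let n > 2 be an even integer, say n = 2k, and let d = gcd{ C(n,i) : 1 < i < n, i ≠ k }. Then: if n = 2^e then d ∈ {2, 4}; if n = 2p^e for an odd prime p then d = p; and in all other cases d = 1. -/
/-!
Every prime `q` dividing `d` divides `C(n, n - 1) = n`. Write `n = q^t m` with `q ∤ m`. If `m ≥ 3`
then `q^t` is an admissible index and `C(n, q^t) ≡ m (mod q)` by Lucas, so `q ∤ d`; hence `d = 1`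
unless `n = 2^e` or `n = 2 p^e`. In those two cases `p` divides `C(n, i)` whenever `p^e ∤ i`, i.e.
for every admissible `i`. For odd `p`, the first argument with `q = 2`, `m = p^e` shows that `d`
is odd, and `C(n, 2p^(e-1)) = p · C(n - 1, 2p^(e-1) - 1)` with the cofactor `≡ 2p - 1 (mod p)`
by Lucas, so `d = p`; for `p = 2`, `C(n, n/4) = 4 · C(n - 1, n/4 - 1)` with an odd cofactor, so `d ∣ 4`.
-/

open Nat

namespace Nat

theorem Prime.dvd_choose_of_pow_dvd_of_not_pow_dvd {p t N i : ℕ} (hp : p.Prime)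
    (hN : p ^ t ∣ N) (hi : ¬ p ^ t ∣ i) : p ∣ N.choose i := by
  have hi0 : i ≠ 0 := by rintro rfl; exact hi (dvd_zero _)
  obtain rfl | hN0 := eq_or_ne N 0
  · simp [choose_eq_zero_of_lt (pos_of_ne_zero hi0)]
  by_contra h
  have key : N * (N - 1).choose (i - 1) = N.choose i * i := by
    simpa [Nat.sub_add_cancel (one_le_iff_ne_zero.2 hN0),
      Nat.sub_add_cancel (one_le_iff_ne_zero.2 hi0)] using add_one_mul_choose_eq (N - 1) (i - 1)
  exact hi <| (((hp.coprime_iff_not_dvd).2 h).pow_left t).dvd_of_dvd_mul_left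
    (hN.trans ⟨_, key.symm⟩)

theorem choose_mul_self_eq_mul_choose_sub_one (r : ℕ) {i : ℕ} (hi : i ≠ 0) :
    (r * i).choose i = r * (r * i - 1).choose (i - 1) := by
  obtain rfl | hr := eq_or_ne r 0
  · simp [choose_eq_zero_of_lt (pos_of_ne_zero hi)]
  have key := add_one_mul_choose_eq (r * i - 1) (i - 1)
  rw [Nat.sub_add_cancel (one_le_iff_ne_zero.2 (mul_ne_zero hr hi)),
    Nat.sub_add_cancel (one_le_iff_ne_zero.2 hi)] at key
  apply Nat.eq_of_mul_eq_mul_right (pos_of_ne_zero hi)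
  rw [← key]; ring

end Nat

namespace Choose

variable {p : ℕ} [Fact p.Prime]

theorem choose_sub_one_add_mul_modEq_choose (a b : ℕ) :
    choose (p - 1 + p * a) (p - 1 + p * b) ≡ choose a b [MOD p] := by
  have hp : 0 < p := (Fact.out : p.Prime).pos
  have hlt : p - 1 < p := by omega
  grw [choose_modEq_choose_mod_mul_choose_div_nat]
  simp [Nat.add_mul_mod_self_left, Nat.add_mul_div_left _ _ hp, Nat.mod_eq_of_lt hlt,
    Nat.div_eq_of_lt hlt, Nat.ModEq.refl]

theorem choose_pow_mul_sub_one_pow_mul_sub_one_modEq_choose (t : ℕ) {m j : ℕ} (hm : m ≠ 0)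
    (hj : j ≠ 0) : choose (p ^ t * m - 1) (p ^ t * j - 1) ≡ choose (m - 1) (j - 1) [MOD p] := by
  induction t with
  | zero => simp [Nat.ModEq.refl]
  | succ t ih =>
    have hp : 0 < p := (Fact.out : p.Prime).pos
    have hsplit {c : ℕ} (hc : c ≠ 0) : p ^ (t + 1) * c - 1 = p - 1 + p * (p ^ t * c - 1) := by
      have : p ≤ p * (p ^ t * c) := Nat.le_mul_of_pos_right p (by positivity)
      rw [pow_succ, mul_comm _ p, mul_assoc, Nat.mul_sub_one]
      omega
    rw [hsplit hm, hsplit hj]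
    exact (choose_sub_one_add_mul_modEq_choose _ _).trans ih

end Choose

theorem not_sq_dvd_choose_two_mul_pow {p : ℕ} (hp : p.Prime) (f : ℕ) :
    ¬ p ^ 2 ∣ (2 * p ^ (f + 1)).choose (2 * p ^ f) := by
  have := Fact.mk hp
  have hlucas := Choose.choose_pow_mul_sub_one_pow_mul_sub_one_modEq_choose (p := p) f
    (m := 2 * p) (j := 2) (mul_ne_zero two_ne_zero hp.ne_zero) two_ne_zero
  rw [show 2 * p ^ (f + 1) = p * (2 * p ^ f) by ring,
    Nat.choose_mul_self_eq_mul_choose_sub_one p (mul_ne_zero two_ne_zero (pow_ne_zero f hp.ne_zero)),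
    pow_two,
    Nat.mul_dvd_mul_iff_left hp.pos, show p * (2 * p ^ f) = p ^ f * (2 * p) by ring,
    mul_comm 2 (p ^ f), hlucas.dvd_iff dvd_rfl, Nat.choose_one_right]
  intro h
  have : p ∣ 1 := by
    simpa [show 2 * p - (2 * p - 1) = 1 by have := hp.pos; omega] using
      Nat.dvd_sub (dvd_mul_left p 2) h
  exact hp.one_lt.ne' (Nat.dvd_one.1 this)

theorem not_two_pow_three_dvd_choose_two_mul_two_pow (f : ℕ) :
    ¬ 2 ^ 3 ∣ (2 * 2 ^ (f + 2)).choose (2 ^ (f + 1)) := by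
  have hlucas := Choose.choose_pow_mul_sub_one_pow_mul_sub_one_modEq_choose (p := 2) (f + 1)
    (m := 4) (j := 1) four_ne_zero one_ne_zero
  rw [mul_one] at hlucas
  rw [show 2 * 2 ^ (f + 2) = 4 * 2 ^ (f + 1) by ring,
    Nat.choose_mul_self_eq_mul_choose_sub_one 4 (by positivity), pow_succ,
    show 2 ^ 2 = 4 by rfl, Nat.mul_dvd_mul_iff_left four_pos, mul_comm 4,
    hlucas.dvd_iff dvd_rfl]
  decide

theorem dvd_pow_of_dvd_pow_of_not_pow_succ_dvd {p d e s : ℕ} (hp : p.Prime) (hd : d ∣ p ^ e)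
    (hs : ¬ p ^ (s + 1) ∣ d) : d ∣ p ^ s := by
  obtain ⟨j, -, rfl⟩ := (Nat.dvd_prime_pow hp).1 hd
  exact Nat.pow_dvd_pow p (by by_contra! h; exact hs (Nat.pow_dvd_pow p h))

def interiorGcd (n k : ℕ) : ℕ :=
  ((Finset.Ioo 1 n).filter fun i => i ≠ k).gcd fun i => n.choose i

section interiorGcd

variable {n k : ℕ}

theorem interiorGcd_dvd_choose {i : ℕ} (h1 : 1 < i) (hn : i < n) (hk : i ≠ k) :
    interiorGcd n k ∣ n.choose i :=
  Finset.gcd_dvd (by simp [h1, hn, hk])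

theorem dvd_interiorGcd {a : ℕ} (h : ∀ i, 1 < i → i < n → i ≠ k → a ∣ n.choose i) :
    a ∣ interiorGcd n k :=
  Finset.dvd_gcd fun i hi => by
    simp only [Finset.mem_filter, Finset.mem_Ioo] at hi
    exact h i hi.1.1 hi.1.2 hi.2

theorem interiorGcd_dvd_self (hn : 2 < n) (hk : n - 1 ≠ k) : interiorGcd n k ∣ n := by
  simpa [Nat.choose_symm (by omega : 1 ≤ n)] using
    interiorGcd_dvd_choose (by omega) (by omega : n - 1 < n) hk

theorem prime_dvd_interiorGcd_two_mul_pow {p : ℕ} (hp : p.Prime) (e : ℕ) :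
    p ∣ interiorGcd (2 * p ^ e) (p ^ e) := by
  refine dvd_interiorGcd fun i h1 hn hk => hp.dvd_choose_of_pow_dvd_of_not_pow_dvd
    (dvd_mul_left _ 2) ?_
  rintro ⟨c, rfl⟩
  have : c < 2 := lt_of_mul_lt_mul_left (hn.trans_eq (mul_comm _ _)) (Nat.zero_le _)
  interval_cases c <;> simp_all

theorem prime_not_dvd_interiorGcd {q t m : ℕ} (hq : q.Prime) (ht : t ≠ 0) (hm : ¬ q ∣ m)
    (hm3 : 3 ≤ m) (hk : q ^ t * m = 2 * k) : ¬ q ∣ interiorGcd (q ^ t * m) k := by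
  have := Fact.mk hq
  have hqt : 1 < q ^ t := Nat.one_lt_pow ht hq.one_lt
  have hlt : 2 * q ^ t < q ^ t * m := by nlinarith
  have hdvd := interiorGcd_dvd_choose (n := q ^ t * m) (k := k) hqt (by nlinarith) (by omega)
  have hlucas := Choose.choose_pow_mul_pow_mul_modEq_choose_nat (p := q) (k := t) (a := m) (b := 1)
  rw [mul_one, Nat.choose_one_right] at hlucas
  exact fun h => hm ((hlucas.dvd_iff dvd_rfl).1 (h.trans hdvd))

theorem interiorGcd_two_mul_prime_pow {p e : ℕ} (hp : p.Prime) (hodd : Odd p) (he : e ≠ 0) :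
    interiorGcd (2 * p ^ e) (p ^ e) = p := by
  obtain ⟨f, rfl⟩ : ∃ f, e = f + 1 := ⟨e - 1, by omega⟩
  have hp3 : 3 ≤ p ^ (f + 1) := by
    have := hp.two_le
    obtain ⟨r, rfl⟩ := hodd
    exact le_trans (by omega) (Nat.le_self_pow (succ_ne_zero f) _)
  have hpd := prime_dvd_interiorGcd_two_mul_pow hp (f + 1)
  have hdn : interiorGcd (2 * p ^ (f + 1)) (p ^ (f + 1)) ∣ 2 * p ^ (f + 1) :=
    interiorGcd_dvd_self (by omega) (by omega)
  have hd2 : ¬ 2 ∣ interiorGcd (2 * p ^ (f + 1)) (p ^ (f + 1)) := by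
    simpa using prime_not_dvd_interiorGcd prime_two one_ne_zero hodd.pow.not_two_dvd_nat hp3
      (k := p ^ (f + 1)) (by ring)
  have hdp := (Nat.Coprime.dvd_of_dvd_mul_left ((prime_two.coprime_iff_not_dvd).2 hd2).symm hdn)
  have hsq : ¬ p ^ 2 ∣ interiorGcd (2 * p ^ (f + 1)) (p ^ (f + 1)) := by
    have hpf : 0 < p ^ f := pow_pos hp.pos f
    have hlt : p ^ f < p ^ (f + 1) := Nat.pow_lt_pow_right hp.one_lt (lt_add_one f)
    refine fun h => not_sq_dvd_choose_two_mul_pow hp f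
      (h.trans (interiorGcd_dvd_choose (by omega) (by omega) ?_))
    exact fun h => hodd.pow.not_two_dvd_nat ⟨_, h.symm⟩
  exact Nat.dvd_antisymm (by simpa using dvd_pow_of_dvd_pow_of_not_pow_succ_dvd hp hdp hsq) hpd

theorem interiorGcd_two_mul_two_pow {e : ℕ} (he : e ≠ 0) :
    interiorGcd (2 * 2 ^ e) (2 ^ e) = 2 ∨ interiorGcd (2 * 2 ^ e) (2 ^ e) = 4 := by
  have hd4 : interiorGcd (2 * 2 ^ e) (2 ^ e) ∣ 2 ^ 2 := by
    obtain rfl | ⟨f, rfl⟩ : e = 1 ∨ ∃ f, e = f + 2 := by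
      rcases e with _ | _ | f <;> simp_all
    · exact interiorGcd_dvd_self (n := 4) (by norm_num) (by norm_num)
    · have hf : 2 ≤ 2 ^ (f + 1) := Nat.le_self_pow (succ_ne_zero f) 2
      have hf2 : 2 ^ (f + 2) = 2 * 2 ^ (f + 1) := pow_succ' 2 (f + 1)
      have hdn : interiorGcd (2 * 2 ^ (f + 2)) (2 ^ (f + 2)) ∣ 2 ^ (f + 3) := by
        rw [show 2 ^ (f + 3) = 2 * 2 ^ (f + 2) by ring]
        exact interiorGcd_dvd_self (by omega) (by omega)
      exact dvd_pow_of_dvd_pow_of_not_pow_succ_dvd prime_two hdn fun h =>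
        not_two_pow_three_dvd_choose_two_mul_two_pow f
          (h.trans (interiorGcd_dvd_choose (by omega) (by omega) (by omega)))
  obtain ⟨j, hj, hd⟩ := (Nat.dvd_prime_pow prime_two).1 hd4
  have hd2 := prime_dvd_interiorGcd_two_mul_pow prime_two e
  rw [hd] at hd2 ⊢
  interval_cases j <;> simp_all

theorem interiorGcd_eq_one (hk : n = 2 * k) (hn : n ≠ 0) (h2 : ¬ ∃ e, n = 2 ^ e)
    (hp : ¬ ∃ p e : ℕ, p.Prime ∧ Odd p ∧ n = 2 * p ^ e) : interiorGcd n k = 1 := by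
  refine Nat.eq_one_iff_not_exists_prime_dvd.2 fun q hq hqd => ?_
  have hn2 : n ≠ 2 := fun h => h2 ⟨1, h⟩
  have hqn : q ∣ n := hqd.trans (interiorGcd_dvd_self (by omega) (by omega))
  have hnm : q ^ n.factorization q * ordCompl[q] n = n := Nat.ordProj_mul_ordCompl_eq_self n q
  have hm3 : 3 ≤ ordCompl[q] n := by
    have hm0 : ordCompl[q] n ≠ 0 := by rintro h; simp [h] at hnm; exact hn hnm.symm
    have hm1 : ordCompl[q] n ≠ 1 := by
      intro h
      rw [h, mul_one] at hnm
      have hq2 : q = 2 := ((Nat.prime_dvd_prime_iff_eq prime_two hq).1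
        (prime_two.dvd_of_dvd_pow (hnm ▸ hk ▸ dvd_mul_right 2 k))).symm
      exact h2 ⟨_, hq2 ▸ hnm.symm⟩
    have hm2 : ordCompl[q] n ≠ 2 := by
      intro h
      rw [h, mul_comm] at hnm
      obtain rfl | hq2 := eq_or_ne q 2
      · exact h2 ⟨_, hnm.symm.trans (pow_succ' 2 _).symm⟩
      · exact hp ⟨q, _, hq, hq.odd_of_ne_two hq2, hnm.symm⟩
    generalize ordCompl[q] n = m at *
    omega
  rw [← hnm] at hqd
  exact prime_not_dvd_interiorGcd hq ((hq.factorization_pos_of_dvd hn hqn).ne')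
    (Nat.not_dvd_ordCompl hq hn) hm3 (hnm.trans hk) hqd

end interiorGcd

/-- For even n = 2k > 2, let d = gcd{C(n,i) : 1 < i < n, i ≠ k}. Then
d ∈ {2,4} if n = 2^e; d = p if n = 2p^e for an odd prime p; and d = 1 otherwise. -/
theorem gcd_interior_binomials_no_middle (n k : ℕ) (hk : n = 2 * k) (hn : 2 < n) :
    let d := (((Finset.Ioo 1 n).filter fun i => i ≠ k).gcd fun i => n.choose i)
    (∀ e : ℕ, n = 2 ^ e → d = 2 ∨ d = 4) ∧
    (∀ p e : ℕ, p.Prime → Odd p → n = 2 * p ^ e → d = p) ∧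
    ((¬ ∃ e : ℕ, n = 2 ^ e) → (¬ ∃ p e : ℕ, p.Prime ∧ Odd p ∧ n = 2 * p ^ e) →
      d = 1) := by
  subst hk
  refine ⟨fun e he => ?_, fun p e hp hodd he => ?_, interiorGcd_eq_one rfl (by omega)⟩
  · obtain ⟨f, rfl⟩ : ∃ f, e = f + 1 := ⟨e - 1, by rcases e with _ | e <;> simp_all⟩
    obtain rfl : k = 2 ^ f := by rw [pow_succ'] at he; omega
    exact interiorGcd_two_mul_two_pow (by rintro rfl; simp at hn)
  · obtain rfl : k = p ^ e := by omega
    exact interiorGcd_two_mul_prime_pow hp hodd (by rintro rfl; simp at hn)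
end

section
/- Let C be an associative unital Φ-algebra with involution, M a left C-module, and h : M × M → C a hermitian form. Suppose (m,a) and (n,b) satisfy a + ā = h(m,m) and b + b̄ = h(n,n). Define Q = −h(m,n)·m + a·n ∈ M and R = a b ā + h(m,n) a h(n,m) − h(m,n) h(m, a·n) ∈ C. Then R + R̄ = h(Q,Q). -/
/-! Expanding `h(Q, Q)` by sesquilinearity gives four terms; substituting `h(m,m) = a + ā` and
`h(n,n) = b + b̄` turns them into exactly the terms of `R + R̄`, since `h(m, a·n) = h(m,n)·ā`
and `conj(h(m,n)) = h(n,m)`. -/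

theorem hermitian_map_add_right {R M : Type*} [AddCommMonoid R] [StarAddMonoid R] [Add M]
    (h : M → M → R) (h_add_left : ∀ m m' n : M, h (m + m') n = h m n + h m' n)
    (h_star : ∀ m n : M, star (h m n) = h n m) (m n n' : M) :
    h m (n + n') = h m n + h m n' := by
  rw [← h_star, h_add_left, star_add, h_star, h_star]

section HermitianForm

variable {C M : Type*} [Ring C] [StarRing C] [AddCommGroup M] [Module C M] (h : M → M → C)

theorem hermitian_map_smul_right (h_smul : ∀ (c : C) (m n : M), h (c • m) n = c * h m n)
    (h_star : ∀ m n : M, star (h m n) = h n m) (c : C) (m n : M) :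
    h m (c • n) = h m n * star c := by
  rw [← h_star, h_smul, star_mul, h_star]

theorem hermitian_apply_smul_add_smul_self
    (h_add_left : ∀ m m' n : M, h (m + m') n = h m n + h m' n)
    (h_smul : ∀ (c : C) (m n : M), h (c • m) n = c * h m n)
    (h_star : ∀ m n : M, star (h m n) = h n m) (c d : C) (m n : M) :
    h (c • m + d • n) (c • m + d • n) =
      c * h m m * star c + c * h m n * star d + d * h n m * star c + d * h n n * star d := by
  simp only [h_add_left, hermitian_map_add_right h h_add_left h_star,
    hermitian_map_smul_right h h_smul h_star, h_smul]
  noncomm_ring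

end HermitianForm

theorem hermitian_Q_grp_lands_in_G_general (C M : Type*) [Ring C] [StarRing C]
    [AddCommGroup M] [Module C M]
    (h : M → M → C)
    (h_add_left : ∀ m m' n : M, h (m + m') n = h m n + h m' n)
    (h_smul : ∀ (c : C) (m n : M), h (c • m) n = c * h m n)
    (h_star : ∀ m n : M, star (h m n) = h n m)
    (m n : M) (a b : C)
    (ha : a + star a = h m m) (hb : b + star b = h n n) :
    (a * b * star a + h m n * a * h n m - h m n * h m (a • n)) +
        star (a * b * star a + h m n * a * h n m - h m n * h m (a • n)) =
      h (-(h m n) • m + a • n) (-(h m n) • m + a • n) := by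
  rw [hermitian_apply_smul_add_smul_self h h_add_left h_smul h_star,
    hermitian_map_smul_right h h_smul h_star, ← ha, ← hb, ← h_star m n]
  simp only [star_add, star_sub, star_mul, star_neg, star_star]
  noncomm_ring

/-- With Q = −h(m,n)·m + a·n and
R = a b ā + h(m,n) a h(n,m) − h(m,n) h(m, a·n), if a + ā = h(m,m) and
b + b̄ = h(n,n), then R + R̄ = h(Q,Q). -/
theorem hermitian_Q_grp_lands_in_G (C M : Type*) [Ring C] [StarRing C]
    [AddCommGroup M] [Module C M]
    (h : M → M → C)
    (h_add_left : ∀ m m' n : M, h (m + m') n = h m n + h m' n)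
    (h_add_right : ∀ m n n' : M, h m (n + n') = h m n + h m n')
    (h_smul : ∀ (c : C) (m n : M), h (c • m) n = c * h m n)
    (h_star : ∀ m n : M, star (h m n) = h n m)
    (m n : M) (a b : C)
    (ha : a + star a = h m m) (hb : b + star b = h n n) :
    (a * b * star a + h m n * a * h n m - h m n * h m (a • n)) +
        star (a * b * star a + h m n * a * h n m - h m n * h m (a • n)) =
      h (-(h m n) • m + a • n) (-(h m n) • m + a • n) :=
  hermitian_Q_grp_lands_in_G_general C M h h_add_left h_smul h_star m n a b ha hb
end

section
/- Let A be an associative unital Φ-algebra with involution a ↦ ā, and let B = A ⊗ Φ[s]/(s² − s) with the involution determined by conj(a ⊗ s) = ā ⊗ (1 − s) (in particular s̄ = 1 − s for the central idempotent s). Equip B × B with the group operation (a,b)·(c,d) = (a+c, b+d+a c̄), and let G_B = { (a,b) ∈ B × B : b + b̄ = a ā }. Then for every x ∈ B: (i) (x, x x̄ s) ∈ G_B and (1, s) ∈ G_B, and (ii) the commutator [(x, x x̄ s), (1, s)] = (0, x − x̄) in this group. -/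
/-!
The commutator of `(a, b)` and `(c, d)` in the group `(a,b)·(c,d) = (a + c, b + d + a c̄)` is
`(0, a c̄ - c ā)`, independently of the second coordinates; for `a = x`, `c = 1` this is
`(0, x - x̄)`. The idempotent `s` with `s̄ = 1 - s` only serves to lift `x` to an element
`(x, x x̄ s)` of `G_B`: it splits the hermitian element `x x̄` as `x x̄ s + conj (x x̄ s)`.
-/

namespace TwistedPair

variable {R : Type*} [Ring R] [StarRing R]

def mul (p q : R × R) : R × R := (p.1 + q.1, p.2 + q.2 + p.1 * star q.1)

def inv (p : R × R) : R × R := (-p.1, -p.2 + p.1 * star p.1)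

theorem commutator_eq (a b c d : R) :
    mul (mul (mul (inv (a, b)) (inv (c, d))) (a, b)) (c, d) = (0, a * star c - c * star a) := by
  simp only [mul, inv, star_neg, Prod.mk.injEq]
  exact ⟨by abel, by noncomm_ring⟩

end TwistedPair

theorem mul_add_star_mul_of_star_eq_one_sub {R : Type*} [Ring R] [StarRing R] {s y : R}
    (hy : IsSelfAdjoint y) (hsy : Commute s y) (hs_star : star s = 1 - s) :
    y * s + star (y * s) = y := by
  rw [star_mul, hy.star_eq, hs_star, sub_mul, one_mul, hsy.eq, add_sub_cancel]

theorem skew_elements_are_commutators_general (B : Type*)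
    [Ring B] [StarRing B]
    (s : B) (hs_central : ∀ b : B, s * b = b * s)
    (hs_star : star s = 1 - s) :
    let mul : B × B → B × B → B × B := fun p q =>
      (p.1 + q.1, p.2 + q.2 + p.1 * star q.1)
    let inv : B × B → B × B := fun p => (-p.1, -p.2 + p.1 * star p.1)
    let G : Set (B × B) := {p | p.2 + star p.2 = p.1 * star p.1}
    ∀ x : B,
      ((x, x * star x * s) ∈ G ∧ ((1 : B), s) ∈ G) ∧
      mul (mul (mul (inv (x, x * star x * s)) (inv (1, s))) (x, x * star x * s))
          (1, s) = (0, x - star x) := by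
  intro mul inv G x
  refine ⟨⟨?_, ?_⟩, ?_⟩
  · exact mul_add_star_mul_of_star_eq_one_sub (IsSelfAdjoint.mul_star_self x)
      (hs_central _) hs_star
  · show s + star s = 1 * star 1
    rw [hs_star, star_one, one_mul, add_sub_cancel]
  · exact (TwistedPair.commutator_eq _ _ _ _).trans (by rw [star_one, mul_one, one_mul])

/-- Let B be the algebra A ⊗ Φ[s]/(s²−s) with involution; what matters is
that B is an associative unital Φ-algebra with involution containing the central
element s with s² = s and s̄ = 1 − s. With the group operation
(a,b)·(c,d) = (a+c, b+d+a c̄) on B × B and G_B = {(a,b) : b + b̄ = a ā}, for every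
x ∈ B: (i) (x, x x̄ s) ∈ G_B and (1,s) ∈ G_B, and (ii) the group commutator
[(x, x x̄ s), (1,s)] equals (0, x − x̄). -/
theorem skew_elements_are_commutators (Φ B : Type*) [CommRing Φ]
    [Ring B] [Algebra Φ B] [StarRing B]
    (s : B) (hs_central : ∀ b : B, s * b = b * s)
    (hs_idem : s * s = s) (hs_star : star s = 1 - s) :
    let mul : B × B → B × B → B × B := fun p q =>
      (p.1 + q.1, p.2 + q.2 + p.1 * star q.1)
    let inv : B × B → B × B := fun p => (-p.1, -p.2 + p.1 * star p.1)
    let G : Set (B × B) := {p | p.2 + star p.2 = p.1 * star p.1}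
    ∀ x : B,
      ((x, x * star x * s) ∈ G ∧ ((1 : B), s) ∈ G) ∧
      mul (mul (mul (inv (x, x * star x * s)) (inv (1, s))) (x, x * star x * s))
          (1, s) = (0, x - star x) :=
  skew_elements_are_commutators_general B s hs_central hs_star
end
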